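/- (Per-step estimate (5) of Theorem 3.1 for the GBGS method.) Suppose x_k = x_{k-1} + I_{J_{k-1}} A_{J_{k-1}}† (b − A x_{k-1}), where J_{k-1} is the greedy index set determined by θ ∈ [0,1] and r_{k-1} = b − A x_{k-1} (with Aᵀr_{k-1} ≠ 0), and that J_{k-1} is a proper subset of {1,…,n}. Suppose further Aᵀ(b − A x_k) ≠ 0, let J_k be the greedy index set determined by θ and r_k = b − A x_k, and let x_{k+1} = x_k + I_{J_k} A_{J_k}† (b − A x_k). Then ‖x_{k+1} − x⋆‖²_{AᵀA} ≤ (1 − (‖A_{J_k}‖_F² / σ_max(A_{J_k})²) · (θ·‖A‖_F²/(‖A‖_F² − ‖A_{J_{k-1}}‖_F²) + (1−θ)) · σ_min(A)² / ‖A‖_F²) · ‖x_k − x⋆‖²_{AᵀA}. -/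

import Mathlib

noncomputable section
open Matrix

/-- Squared Euclidean norm `‖v‖₂²` of a vector. -/
def norm2 {ι : Type*} [Fintype ι] (v : ι → ℝ) : ℝ := ∑ i, (v i) ^ 2

/-- Squared Frobenius norm `‖A‖_F²` of a matrix. -/
def frob2 {ι κ : Type*} [Fintype ι] [Fintype κ] (A : Matrix ι κ ℝ) : ℝ :=
  ∑ i, ∑ j, (A i j) ^ 2

/-- Squared largest singular value `σ_max(B)²`, i.e. the largest eigenvalue of `Bᵀ * B`. -/
def sigmaMaxSq {ι κ : Type*} [Fintype ι] [Fintype κ] [DecidableEq κ]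
    (B : Matrix ι κ ℝ) : ℝ :=
  sSup (Set.range (show (Bᵀ * B).IsHermitian by
    have h := Matrix.isHermitian_conjTranspose_mul_self B
    rwa [Matrix.conjTranspose_eq_transpose_of_trivial] at h).eigenvalues)

/-- Squared smallest singular value `σ_min(B)²`, i.e. the smallest eigenvalue of `Bᵀ * B`. -/
def sigmaMinSq {ι κ : Type*} [Fintype ι] [Fintype κ] [DecidableEq κ]
    (B : Matrix ι κ ℝ) : ℝ :=
  sInf (Set.range (show (Bᵀ * B).IsHermitian by
    have h := Matrix.isHermitian_conjTranspose_mul_self B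
    rwa [Matrix.conjTranspose_eq_transpose_of_trivial] at h).eigenvalues)

/-- Squared Euclidean norm `‖A_(j)‖₂²` of the `j`-th column of `A`. -/
def col2 {m n : ℕ} (A : Matrix (Fin m) (Fin n) ℝ) (j : Fin n) : ℝ := ∑ i, (A i j) ^ 2

/-- `A` has full column rank: its columns are linearly independent. -/
def FullColRank {m n : ℕ} (A : Matrix (Fin m) (Fin n) ℝ) : Prop :=
  LinearIndependent ℝ fun j : Fin n => (fun i => A i j : Fin m → ℝ)

/-- `max_{1 ≤ j ≤ n} |A_(j)ᵀ r|² / ‖A_(j)‖₂²`. -/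
def maxRatio {m n : ℕ} (A : Matrix (Fin m) (Fin n) ℝ) (r : Fin m → ℝ) : ℝ :=
  ⨆ j : Fin n, ((Aᵀ *ᵥ r) j) ^ 2 / col2 A j

/-- The greedy parameter
`ε = (θ/‖Aᵀr‖₂²)·max_j |A_(j)ᵀ r|²/‖A_(j)‖₂² + (1−θ)/‖A‖_F²`. -/
def eps {m n : ℕ} (A : Matrix (Fin m) (Fin n) ℝ) (r : Fin m → ℝ) (θ : ℝ) : ℝ :=
  θ / norm2 (Aᵀ *ᵥ r) * maxRatio A r + (1 - θ) / frob2 A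

open Classical in
/-- The greedy index set `J = { j : |A_(j)ᵀ r|² ≥ ε ‖Aᵀr‖₂² ‖A_(j)‖₂² }`. -/
def greedySet {m n : ℕ} (A : Matrix (Fin m) (Fin n) ℝ) (r : Fin m → ℝ) (θ : ℝ) :
    Finset (Fin n) :=
  Finset.univ.filter fun j =>
    eps A r θ * norm2 (Aᵀ *ᵥ r) * col2 A j ≤ ((Aᵀ *ᵥ r) j) ^ 2

/-- The column submatrix `A_J` of `A`, with columns indexed by `J`. -/
def subCols {m n : ℕ} (A : Matrix (Fin m) (Fin n) ℝ) (J : Finset (Fin n)) :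
    Matrix (Fin m) {j // j ∈ J} ℝ :=
  A.submatrix id fun j => (j : Fin n)

/-- The submatrix `I_J` of the `n × n` identity with columns indexed by `J`. -/
def subId {n : ℕ} (J : Finset (Fin n)) : Matrix (Fin n) {j // j ∈ J} ℝ :=
  (1 : Matrix (Fin n) (Fin n) ℝ).submatrix id fun j => (j : Fin n)

/-- Moore–Penrose pseudoinverse of a full-column-rank matrix: `B† = (BᵀB)⁻¹Bᵀ`. -/
def pinv {ι κ : Type*} [Fintype ι] [Fintype κ] [DecidableEq κ] (B : Matrix ι κ ℝ) :
    Matrix κ ι ℝ :=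
  (Bᵀ * B)⁻¹ * Bᵀ

/-- The matrix `Ã_J` whose columns are the normalized columns `A_(j)/‖A_(j)‖₂`, `j ∈ J`. -/
def tildeA {m n : ℕ} (A : Matrix (Fin m) (Fin n) ℝ) (J : Finset (Fin n)) :
    Matrix (Fin m) {j // j ∈ J} ℝ :=
  Matrix.of fun i j => A i (j : Fin n) / Real.sqrt (col2 A (j : Fin n))

/-- The matrix `Ĩ_J` whose columns are `e_j/‖A_(j)‖₂`, `j ∈ J`. -/
def tildeI {m n : ℕ} (A : Matrix (Fin m) (Fin n) ℝ) (J : Finset (Fin n)) :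
    Matrix (Fin n) {j // j ∈ J} ℝ :=
  Matrix.of fun i j => (if i = (j : Fin n) then 1 else 0) / Real.sqrt (col2 A (j : Fin n))

/-! The step `x ↦ x + I_J A_J† r` moves `A x` by the orthogonal projection of the residual `r`
onto the range of `A_J`, so the new residual is orthogonal to the columns in `J` and, by
Pythagoras, the energy error drops by exactly `‖A_J A_J† r‖²`. Writing `A_Jᵀ r = G (A_J† r)`
with `G = A_Jᵀ A_J` and comparing `G²` with `σ_max(A_J)² G` bounds this drop below by
`‖A_Jᵀ r‖² / σ_max(A_J)²`, and the greedy rule gives `‖A_Jᵀ r‖² ≥ ε ‖Aᵀr‖² ‖A_J‖_F²`.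
Because `r_k` is orthogonal to the columns in `J_{k-1}`, only the remaining columns contribute
to `‖Aᵀ r_k‖²`, whence `‖Aᵀ r_k‖² ≤ max_j |A_(j)ᵀ r_k|²/‖A_(j)‖₂² · (‖A‖_F² − ‖A_{J_{k-1}}‖_F²)`;
this turns `ε ‖Aᵀ r_k‖²` into the stated factor times `‖Aᵀ r_k‖² / ‖A‖_F²`. Finally
`Aᵀ r_k = AᵀA (x⋆ − x_k)` and comparing `(AᵀA)²` with `σ_min(A)² AᵀA` gives
`‖Aᵀ r_k‖² ≥ σ_min(A)² ‖A(x_k − x⋆)‖²`. -/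

lemma norm2_eq_dotProduct {ι : Type*} [Fintype ι] (v : ι → ℝ) : norm2 v = v ⬝ᵥ v := by
  simp only [norm2, dotProduct, sq]

lemma norm2_nonneg {ι : Type*} [Fintype ι] (v : ι → ℝ) : 0 ≤ norm2 v :=
  Finset.sum_nonneg fun _ _ => sq_nonneg _

lemma norm2_pos {ι : Type*} [Fintype ι] {v : ι → ℝ} (hv : v ≠ 0) : 0 < norm2 v := by
  obtain ⟨i, hi⟩ := Function.ne_iff.1 hv
  exact Finset.sum_pos' (fun _ _ => sq_nonneg _) ⟨i, Finset.mem_univ i, sq_pos_of_ne_zero hi⟩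

lemma norm2_neg {ι : Type*} [Fintype ι] (v : ι → ℝ) : norm2 (-v) = norm2 v := by
  simp only [norm2, Pi.neg_apply, neg_sq]

lemma frob2_nonneg {ι κ : Type*} [Fintype ι] [Fintype κ] (B : Matrix ι κ ℝ) : 0 ≤ frob2 B :=
  Finset.sum_nonneg fun _ _ => Finset.sum_nonneg fun _ _ => sq_nonneg _

section Spectral

variable {κ : Type*} [Fintype κ] [DecidableEq κ]

lemma dotProduct_mul_diagonal_mul_transpose_mulVec (U : Matrix κ κ ℝ) (d v : κ → ℝ) :
    v ⬝ᵥ ((U * diagonal d * Uᵀ) *ᵥ v) = ∑ i, d i * (Uᵀ *ᵥ v) i ^ 2 := by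
  rw [← mulVec_mulVec, ← mulVec_mulVec, dotProduct_mulVec, ← mulVec_transpose]
  simp only [dotProduct, mulVec_diagonal, sq]
  exact Finset.sum_congr rfl fun i _ => by ring

namespace Matrix.IsHermitian

variable {M : Matrix κ κ ℝ} (hM : M.IsHermitian)
include hM

lemma eq_mul_diagonal_mul_transpose :
    M = (hM.eigenvectorUnitary : Matrix κ κ ℝ) * diagonal hM.eigenvalues *
      (hM.eigenvectorUnitary : Matrix κ κ ℝ)ᵀ := by
  simpa only [← conjTranspose_eq_transpose_of_trivial, ← star_eq_conjTranspose,
    RCLike.ofReal_real_eq_id, CompTriple.comp_eq, Unitary.conjStarAlgAut_apply]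
    using hM.spectral_theorem

lemma mul_self_eq_mul_diagonal_mul_transpose :
    M * M = (hM.eigenvectorUnitary : Matrix κ κ ℝ) * diagonal (hM.eigenvalues ^ 2) *
      (hM.eigenvectorUnitary : Matrix κ κ ℝ)ᵀ := by
  have hUU : (hM.eigenvectorUnitary : Matrix κ κ ℝ)ᵀ * hM.eigenvectorUnitary = 1 := by
    simpa only [← conjTranspose_eq_transpose_of_trivial, ← star_eq_conjTranspose]
      using Unitary.coe_star_mul_self hM.eigenvectorUnitary
  conv_lhs => rw [hM.eq_mul_diagonal_mul_transpose]
  generalize (hM.eigenvectorUnitary : Matrix κ κ ℝ) = U at hUU ⊢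
  calc U * diagonal hM.eigenvalues * Uᵀ * (U * diagonal hM.eigenvalues * Uᵀ)
      = U * diagonal hM.eigenvalues * (Uᵀ * U) * diagonal hM.eigenvalues * Uᵀ := by
        simp only [Matrix.mul_assoc]
    _ = _ := by
        rw [hUU, Matrix.mul_one, Matrix.mul_assoc U, diagonal_mul_diagonal, sq]
        rfl

lemma dotProduct_mulVec_eq_sum (v : κ → ℝ) :
    v ⬝ᵥ (M *ᵥ v) = ∑ i, hM.eigenvalues i *
      ((hM.eigenvectorUnitary : Matrix κ κ ℝ)ᵀ *ᵥ v) i ^ 2 := by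
  conv_lhs => rw [hM.eq_mul_diagonal_mul_transpose]
  exact dotProduct_mul_diagonal_mul_transpose_mulVec _ _ v

lemma dotProduct_mul_self_mulVec_eq_sum (v : κ → ℝ) :
    v ⬝ᵥ ((M * M) *ᵥ v) = ∑ i, hM.eigenvalues i ^ 2 *
      ((hM.eigenvectorUnitary : Matrix κ κ ℝ)ᵀ *ᵥ v) i ^ 2 := by
  rw [hM.mul_self_eq_mul_diagonal_mul_transpose]
  exact dotProduct_mul_diagonal_mul_transpose_mulVec _ _ v

end Matrix.IsHermitian

namespace Matrix.PosSemidef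

variable {M : Matrix κ κ ℝ} (hM : M.PosSemidef)
include hM

lemma sInf_eigenvalues_mul_le (v : κ → ℝ) :
    sInf (Set.range hM.1.eigenvalues) * (v ⬝ᵥ (M *ᵥ v)) ≤ v ⬝ᵥ ((M * M) *ᵥ v) := by
  rw [hM.1.dotProduct_mulVec_eq_sum, hM.1.dotProduct_mul_self_mulVec_eq_sum, Finset.mul_sum]
  refine Finset.sum_le_sum fun i _ => ?_
  have hle : sInf (Set.range hM.1.eigenvalues) ≤ hM.1.eigenvalues i :=
    csInf_le (Set.finite_range _).bddBelow ⟨i, rfl⟩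
  rw [← mul_assoc, sq (hM.1.eigenvalues i)]
  gcongr
  exact hM.eigenvalues_nonneg i

lemma le_sSup_eigenvalues_mul (v : κ → ℝ) :
    v ⬝ᵥ ((M * M) *ᵥ v) ≤ sSup (Set.range hM.1.eigenvalues) * (v ⬝ᵥ (M *ᵥ v)) := by
  rw [hM.1.dotProduct_mulVec_eq_sum, hM.1.dotProduct_mul_self_mulVec_eq_sum, Finset.mul_sum]
  refine Finset.sum_le_sum fun i _ => ?_
  have hle : hM.1.eigenvalues i ≤ sSup (Set.range hM.1.eigenvalues) :=
    le_csSup (Set.finite_range _).bddAbove ⟨i, rfl⟩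
  rw [← mul_assoc, sq (hM.1.eigenvalues i)]
  gcongr
  exact hM.eigenvalues_nonneg i

end Matrix.PosSemidef

end Spectral

section Gram

variable {ι κ : Type*} [Fintype ι] [Fintype κ] (B : Matrix ι κ ℝ)

lemma posSemidef_transpose_mul_self : (Bᵀ * B).PosSemidef := by
  simpa only [conjTranspose_eq_transpose_of_trivial] using posSemidef_conjTranspose_mul_self B

lemma norm2_mulVec_eq_dotProduct (z : κ → ℝ) : norm2 (B *ᵥ z) = z ⬝ᵥ ((Bᵀ * B) *ᵥ z) := by
  rw [norm2_eq_dotProduct, ← mulVec_mulVec, dotProduct_mulVec z, vecMul_transpose]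

lemma norm2_gram_mulVec_eq_dotProduct (z : κ → ℝ) :
    norm2 ((Bᵀ * B) *ᵥ z) = z ⬝ᵥ (((Bᵀ * B) * (Bᵀ * B)) *ᵥ z) := by
  have hsymm : (Bᵀ * B)ᵀ = Bᵀ * B := by rw [transpose_mul, transpose_transpose]
  rw [norm2_eq_dotProduct, ← mulVec_mulVec _ (Bᵀ * B), dotProduct_mulVec z, ← mulVec_transpose,
    hsymm]

lemma norm2_sub_mulVec_of_transpose_mulVec_eq_zero {p : ι → ℝ} (hp : Bᵀ *ᵥ p = 0)
    (z : κ → ℝ) : norm2 (p - B *ᵥ z) = norm2 p + norm2 (B *ᵥ z) := by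
  have hpz : p ⬝ᵥ (B *ᵥ z) = 0 := by
    rw [dotProduct_mulVec, ← mulVec_transpose, hp, zero_dotProduct]
  simp only [norm2_eq_dotProduct, sub_dotProduct, dotProduct_sub, dotProduct_comm (B *ᵥ z) p, hpz]
  ring

lemma posDef_transpose_mul_self (hB : Function.Injective B.mulVec) : (Bᵀ * B).PosDef := by
  simpa only [conjTranspose_eq_transpose_of_trivial] using PosDef.conjTranspose_mul_self B hB

variable [DecidableEq κ]

lemma sigmaMinSq_mul_norm2_le (z : κ → ℝ) :
    sigmaMinSq B * norm2 (B *ᵥ z) ≤ norm2 ((Bᵀ * B) *ᵥ z) := by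
  rw [norm2_gram_mulVec_eq_dotProduct, norm2_mulVec_eq_dotProduct]
  exact (posSemidef_transpose_mul_self B).sInf_eigenvalues_mul_le z

lemma norm2_gram_mulVec_le (z : κ → ℝ) :
    norm2 ((Bᵀ * B) *ᵥ z) ≤ sigmaMaxSq B * norm2 (B *ᵥ z) := by
  rw [norm2_gram_mulVec_eq_dotProduct, norm2_mulVec_eq_dotProduct]
  exact (posSemidef_transpose_mul_self B).le_sSup_eigenvalues_mul z

lemma sigmaMaxSq_nonneg : 0 ≤ sigmaMaxSq B :=
  Real.sSup_nonneg (Set.forall_mem_range.2 (posSemidef_transpose_mul_self B).eigenvalues_nonneg)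

variable {B} (hB : Function.Injective B.mulVec)
include hB

lemma sigmaMaxSq_pos [Nonempty κ] : 0 < sigmaMaxSq B := by
  obtain ⟨j⟩ := ‹Nonempty κ›
  have hpd := posDef_transpose_mul_self B hB
  exact (hpd.eigenvalues_pos j).trans_le (le_csSup (Set.finite_range _).bddAbove ⟨j, rfl⟩)

lemma gram_mulVec_pinv_mulVec (r : ι → ℝ) : (Bᵀ * B) *ᵥ (pinv B *ᵥ r) = Bᵀ *ᵥ r := by
  have hdet := (isUnit_iff_isUnit_det _).1 (posDef_transpose_mul_self B hB).isUnit
  rw [pinv, mulVec_mulVec, ← Matrix.mul_assoc, mul_nonsing_inv _ hdet, Matrix.one_mul]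

lemma transpose_mulVec_sub_mulVec_pinv (r : ι → ℝ) : Bᵀ *ᵥ (r - B *ᵥ (pinv B *ᵥ r)) = 0 := by
  rw [mulVec_sub, mulVec_mulVec, gram_mulVec_pinv_mulVec hB, sub_self]

lemma norm2_transpose_mulVec_le (r : ι → ℝ) :
    norm2 (Bᵀ *ᵥ r) ≤ sigmaMaxSq B * norm2 (B *ᵥ (pinv B *ᵥ r)) := by
  rw [← gram_mulVec_pinv_mulVec hB]
  exact norm2_gram_mulVec_le B _

end Gram

section Columns

variable {m n : ℕ} (A : Matrix (Fin m) (Fin n) ℝ)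

lemma mulVec_subId_mulVec (J : Finset (Fin n)) (y : J → ℝ) :
    A *ᵥ (subId J *ᵥ y) = subCols A J *ᵥ y := by
  rw [mulVec_mulVec]
  congr 1
  ext i j
  simp only [subId, subCols, mul_apply, submatrix_apply, one_apply, id_eq, mul_ite, mul_one,
    mul_zero, Finset.sum_ite_eq', Finset.mem_univ, ↓reduceIte]

lemma subCols_transpose_mulVec (J : Finset (Fin n)) (w : Fin m → ℝ) (j : J) :
    ((subCols A J)ᵀ *ᵥ w) j = (Aᵀ *ᵥ w) j :=
  rfl

lemma frob2_eq_sum_col2 : frob2 A = ∑ j, col2 A j := by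
  rw [frob2, Finset.sum_comm]
  rfl

lemma frob2_subCols (J : Finset (Fin n)) : frob2 (subCols A J) = ∑ j ∈ J, col2 A j := by
  rw [frob2, Finset.sum_comm, ← Finset.sum_coe_sort J]
  rfl

lemma frob2_sub_frob2_subCols (J : Finset (Fin n)) :
    frob2 A - frob2 (subCols A J) = ∑ j ∈ Jᶜ, col2 A j := by
  rw [frob2_eq_sum_col2, frob2_subCols, ← Finset.sum_add_sum_compl J, add_sub_cancel_left]

lemma frob2_subCols_le (J : Finset (Fin n)) : frob2 (subCols A J) ≤ frob2 A := by
  rw [← sub_nonneg, frob2_sub_frob2_subCols]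
  exact Finset.sum_nonneg fun _ _ => norm2_nonneg _

lemma norm2_subCols_transpose_mulVec (J : Finset (Fin n)) (w : Fin m → ℝ) :
    norm2 ((subCols A J)ᵀ *ᵥ w) = ∑ j ∈ J, (Aᵀ *ᵥ w) j ^ 2 := by
  rw [← Finset.sum_coe_sort J]
  rfl

variable {A}

lemma FullColRank.injective_subCols_mulVec (hA : FullColRank A) (J : Finset (Fin n)) :
    Function.Injective (subCols A J).mulVec :=
  mulVec_injective_iff.2 (hA.comp _ Subtype.val_injective)

lemma FullColRank.col2_pos (hA : FullColRank A) (j : Fin n) : 0 < col2 A j :=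
  norm2_pos (hA.ne_zero j)

end Columns

section BlockUpdate

variable {m n : ℕ} {A : Matrix (Fin m) (Fin n) ℝ} {b : Fin m → ℝ} {J : Finset (Fin n)}
  {x x' : Fin n → ℝ}

lemma transpose_mulVec_residual {xstar : Fin n → ℝ} (hstar : (Aᵀ * A) *ᵥ xstar = Aᵀ *ᵥ b)
    (x : Fin n → ℝ) : Aᵀ *ᵥ (b - A *ᵥ x) = (Aᵀ * A) *ᵥ (xstar - x) := by
  rw [mulVec_sub, mulVec_sub, hstar, mulVec_mulVec]

variable (hx' : x' = x + subId J *ᵥ (pinv (subCols A J) *ᵥ (b - A *ᵥ x)))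
include hx'

lemma residual_update : b - A *ᵥ x' =
    (b - A *ᵥ x) - subCols A J *ᵥ (pinv (subCols A J) *ᵥ (b - A *ᵥ x)) := by
  rw [hx', mulVec_add, mulVec_subId_mulVec]
  abel

lemma subCols_transpose_mulVec_residual_update_eq_zero (hA : FullColRank A) :
    (subCols A J)ᵀ *ᵥ (b - A *ᵥ x') = 0 := by
  rw [residual_update hx']
  exact transpose_mulVec_sub_mulVec_pinv (hA.injective_subCols_mulVec J) _

lemma norm2_mulVec_update_sub_eq (hA : FullColRank A) {xstar : Fin n → ℝ}
    (hstar : (Aᵀ * A) *ᵥ xstar = Aᵀ *ᵥ b) :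
    norm2 (A *ᵥ (x' - xstar)) = norm2 (A *ᵥ (x - xstar)) -
      norm2 (subCols A J *ᵥ (pinv (subCols A J) *ᵥ (b - A *ᵥ x))) := by
  have hperp : (subCols A J)ᵀ *ᵥ (A *ᵥ (x' - xstar)) = 0 := by
    funext j
    have h := congrFun (subCols_transpose_mulVec_residual_update_eq_zero hx' hA) j
    rw [subCols_transpose_mulVec, transpose_mulVec_residual hstar, ← neg_sub, mulVec_neg,
      Pi.neg_apply, Pi.zero_apply, neg_eq_zero] at h
    rwa [subCols_transpose_mulVec, mulVec_mulVec]
  have hsplit : A *ᵥ (x - xstar) = A *ᵥ (x' - xstar) -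
      subCols A J *ᵥ (pinv (subCols A J) *ᵥ (b - A *ᵥ x)) := by
    rw [hx', ← mulVec_subId_mulVec, ← mulVec_sub]
    congr 1
    abel
  rw [hsplit, norm2_sub_mulVec_of_transpose_mulVec_eq_zero _ hperp, add_sub_cancel_right]

end BlockUpdate

section Greedy

variable {m n : ℕ} {A : Matrix (Fin m) (Fin n) ℝ} {r : Fin m → ℝ} {θ : ℝ}

lemma maxRatio_nonneg : 0 ≤ maxRatio A r :=
  Real.iSup_nonneg fun _ => div_nonneg (sq_nonneg _) (norm2_nonneg _)

lemma eps_mul_norm2 (hr : Aᵀ *ᵥ r ≠ 0) :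
    eps A r θ * norm2 (Aᵀ *ᵥ r) =
      θ * maxRatio A r + (1 - θ) * (norm2 (Aᵀ *ᵥ r) / frob2 A) := by
  have hN := (norm2_pos hr).ne'
  rw [eps]
  field_simp

lemma eps_mul_norm2_mul_frob2_le :
    eps A r θ * norm2 (Aᵀ *ᵥ r) * frob2 (subCols A (greedySet A r θ)) ≤
      norm2 ((subCols A (greedySet A r θ))ᵀ *ᵥ r) := by
  rw [norm2_subCols_transpose_mulVec, frob2_subCols, Finset.mul_sum]
  refine Finset.sum_le_sum fun j hj => ?_
  exact (Finset.mem_filter.1 hj).2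

variable (hA : FullColRank A)
include hA

lemma sq_le_maxRatio_mul_col2 (j : Fin n) : (Aᵀ *ᵥ r) j ^ 2 ≤ maxRatio A r * col2 A j := by
  rw [← div_le_iff₀ (hA.col2_pos j)]
  exact le_ciSup (f := fun j => (Aᵀ *ᵥ r) j ^ 2 / col2 A j) (Set.finite_range _).bddAbove j

lemma norm2_transpose_mulVec_le_maxRatio_mul {s : Finset (Fin n)}
    (hs : ∀ j ∉ s, (Aᵀ *ᵥ r) j = 0) :
    norm2 (Aᵀ *ᵥ r) ≤ maxRatio A r * ∑ j ∈ s, col2 A j := by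
  rw [norm2, ← Finset.sum_subset (Finset.subset_univ s) fun j _ hj => by rw [hs j hj, sq,
    mul_zero], Finset.mul_sum]
  exact Finset.sum_le_sum fun j _ => sq_le_maxRatio_mul_col2 hA j

lemma greedySet_nonempty (hθ : θ ≤ 1) (hr : Aᵀ *ᵥ r ≠ 0) : (greedySet A r θ).Nonempty := by
  have : Nonempty (Fin n) := ⟨(Function.ne_iff.1 hr).choose⟩
  obtain ⟨j, hj⟩ := Finite.exists_max fun j => (Aᵀ *ᵥ r) j ^ 2 / col2 A j
  have hF : 0 < frob2 A := by
    rw [frob2_eq_sum_col2]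
    exact Finset.sum_pos (fun j _ => hA.col2_pos j) Finset.univ_nonempty
  have hNF : norm2 (Aᵀ *ᵥ r) / frob2 A ≤ maxRatio A r := by
    rw [div_le_iff₀ hF, frob2_eq_sum_col2]
    exact norm2_transpose_mulVec_le_maxRatio_mul hA (s := Finset.univ) (by simp)
  have hεN : eps A r θ * norm2 (Aᵀ *ᵥ r) ≤ maxRatio A r := by
    rw [eps_mul_norm2 hr]
    linarith [mul_le_mul_of_nonneg_left hNF (sub_nonneg.2 hθ)]
  have hR : maxRatio A r ≤ (Aᵀ *ᵥ r) j ^ 2 / col2 A j := ciSup_le hj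
  refine ⟨j, Finset.mem_filter.2 ⟨Finset.mem_univ j, ?_⟩⟩
  rw [← le_div_iff₀ (hA.col2_pos j)]
  exact hεN.trans hR

end Greedy

section Contraction

variable {m n : ℕ} {A : Matrix (Fin m) (Fin n) ℝ} (hA : FullColRank A) {θ : ℝ}
  (hθ : θ ∈ Set.Icc (0 : ℝ) 1)
include hA hθ

lemma le_norm2_mulVec_pinv_greedySet {r : Fin m → ℝ} (hr : Aᵀ *ᵥ r ≠ 0) {Jp : Finset (Fin n)}
    (horth : ∀ j ∈ Jp, (Aᵀ *ᵥ r) j = 0) :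
    frob2 (subCols A (greedySet A r θ)) / sigmaMaxSq (subCols A (greedySet A r θ)) *
        (θ * frob2 A / (frob2 A - frob2 (subCols A Jp)) + (1 - θ)) *
        (norm2 (Aᵀ *ᵥ r) / frob2 A) ≤
      norm2 (subCols A (greedySet A r θ) *ᵥ (pinv (subCols A (greedySet A r θ)) *ᵥ r)) := by
  set B := subCols A (greedySet A r θ)
  set N := norm2 (Aᵀ *ᵥ r)
  set F := frob2 A
  set D := F - frob2 (subCols A Jp)
  have hN : 0 < N := norm2_pos hr
  have hND : N ≤ maxRatio A r * D := by
    rw [show D = _ from frob2_sub_frob2_subCols A Jp]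
    exact norm2_transpose_mulVec_le_maxRatio_mul hA fun j hj =>
      horth j (Finset.notMem_compl.1 hj)
  -- the nonzero vector `Aᵀ r` is supported outside `Jp`, so `D > 0`
  have hD : 0 < D := pos_of_mul_pos_right (hN.trans_le hND) maxRatio_nonneg
  have hF : 0 < F := by linarith [frob2_nonneg (subCols A Jp)]
  have : Nonempty (greedySet A r θ) := (greedySet_nonempty hA hθ.2 hr).to_subtype
  have hσ : 0 < sigmaMaxSq B := sigmaMaxSq_pos (hA.injective_subCols_mulVec _)
  have hε : eps A r θ * N = θ * maxRatio A r + (1 - θ) * (N / F) := eps_mul_norm2 hr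
  calc frob2 B / sigmaMaxSq B * (θ * F / D + (1 - θ)) * (N / F)
      = frob2 B / sigmaMaxSq B * (θ * (N / D) + (1 - θ) * (N / F)) := by
        field_simp
    _ ≤ frob2 B / sigmaMaxSq B * (θ * maxRatio A r + (1 - θ) * (N / F)) := by
        have : N / D ≤ maxRatio A r := (div_le_iff₀ hD).2 hND
        have := hθ.1
        have := frob2_nonneg B
        gcongr
    _ = eps A r θ * N * frob2 B / sigmaMaxSq B := by
        rw [hε]
        ring
    _ ≤ norm2 (Bᵀ *ᵥ r) / sigmaMaxSq B := by
        gcongr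
        exact eps_mul_norm2_mul_frob2_le
    _ ≤ norm2 (B *ᵥ (pinv B *ᵥ r)) := by
        rw [div_le_iff₀' hσ]
        exact norm2_transpose_mulVec_le (hA.injective_subCols_mulVec _) r

lemma norm2_mulVec_greedy_update_le {b : Fin m → ℝ} {xstar : Fin n → ℝ}
    (hstar : (Aᵀ * A) *ᵥ xstar = Aᵀ *ᵥ b) {x : Fin n → ℝ} (hr : Aᵀ *ᵥ (b - A *ᵥ x) ≠ 0)
    {Jp : Finset (Fin n)} (horth : ∀ j ∈ Jp, (Aᵀ *ᵥ (b - A *ᵥ x)) j = 0) {x' : Fin n → ℝ}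
    (hx' : x' = x + subId (greedySet A (b - A *ᵥ x) θ) *ᵥ
      (pinv (subCols A (greedySet A (b - A *ᵥ x) θ)) *ᵥ (b - A *ᵥ x))) :
    norm2 (A *ᵥ (x' - xstar)) ≤
      (1 - frob2 (subCols A (greedySet A (b - A *ᵥ x) θ)) /
            sigmaMaxSq (subCols A (greedySet A (b - A *ᵥ x) θ)) *
          (θ * frob2 A / (frob2 A - frob2 (subCols A Jp)) + (1 - θ)) *
          (sigmaMinSq A / frob2 A)) *
        norm2 (A *ᵥ (x - xstar)) := by
  set B := subCols A (greedySet A (b - A *ᵥ x) θ)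
  set K := frob2 B / sigmaMaxSq B * (θ * frob2 A / (frob2 A - frob2 (subCols A Jp)) + (1 - θ))
  have hK : 0 ≤ K := by
    have hD := sub_nonneg.2 (frob2_subCols_le A Jp)
    exact mul_nonneg (div_nonneg (frob2_nonneg B) (sigmaMaxSq_nonneg B))
      (add_nonneg (div_nonneg (mul_nonneg hθ.1 (frob2_nonneg A)) hD) (sub_nonneg.2 hθ.2))
  have hmin : sigmaMinSq A * norm2 (A *ᵥ (x - xstar)) ≤ norm2 (Aᵀ *ᵥ (b - A *ᵥ x)) := by
    rw [transpose_mulVec_residual hstar, ← norm2_neg (A *ᵥ (x - xstar)), ← mulVec_neg, neg_sub]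
    exact sigmaMinSq_mul_norm2_le A _
  have hproj := le_norm2_mulVec_pinv_greedySet hA hθ hr horth
  have hcontr : K * (sigmaMinSq A / frob2 A) * norm2 (A *ᵥ (x - xstar)) ≤
      K * (norm2 (Aᵀ *ᵥ (b - A *ᵥ x)) / frob2 A) := by
    rw [mul_assoc, div_mul_eq_mul_div]
    gcongr
    exact frob2_nonneg A
  rw [norm2_mulVec_update_sub_eq hx' hA hstar]
  linarith

end Contraction

theorem stmt8_general {m n : ℕ} (A : Matrix (Fin m) (Fin n) ℝ) (hA : FullColRank A)
    (b : Fin m → ℝ) (xstar : Fin n → ℝ) (hstar : (Aᵀ * A) *ᵥ xstar = Aᵀ *ᵥ b)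
    (θ : ℝ) (hθ : θ ∈ Set.Icc (0 : ℝ) 1)
    (xprev : Fin n → ℝ)
    (Jprev : Finset (Fin n))
    (xk : Fin n → ℝ)
    (hxk : xk = xprev + subId Jprev *ᵥ (pinv (subCols A Jprev) *ᵥ (b - A *ᵥ xprev)))
    (rk : Fin m → ℝ) (hrk : rk = b - A *ᵥ xk) (hrk0 : Aᵀ *ᵥ rk ≠ 0)
    (Jk : Finset (Fin n)) (hJk : Jk = greedySet A rk θ)
    (xk1 : Fin n → ℝ)
    (hxk1 : xk1 = xk + subId Jk *ᵥ (pinv (subCols A Jk) *ᵥ (b - A *ᵥ xk))) :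
    norm2 (A *ᵥ (xk1 - xstar)) ≤
      (1 - frob2 (subCols A Jk) / sigmaMaxSq (subCols A Jk) *
          (θ * frob2 A / (frob2 A - frob2 (subCols A Jprev)) + (1 - θ)) *
          (sigmaMinSq A / frob2 A)) *
        norm2 (A *ᵥ (xk - xstar)) := by
  subst hrk hJk
  have horth : ∀ j ∈ Jprev, (Aᵀ *ᵥ (b - A *ᵥ xk)) j = 0 := fun j hj =>
    congrFun (subCols_transpose_mulVec_residual_update_eq_zero hxk hA) ⟨j, hj⟩
  exact norm2_mulVec_greedy_update_le hA hθ hstar hrk0 horth hxk1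

/-- per-step estimate (5) of Theorem 3.1, GBGS method: if `x_k` was
produced by a GBGS step with greedy set `J_{k-1} ⊊ {1,…,n}`, and `x_{k+1}` is the
next GBGS iterate with greedy set `J_k`, then
`‖x_{k+1} − x⋆‖²_{AᵀA} ≤ (1 − (‖A_{J_k}‖_F²/σ_max(A_{J_k})²)
  (θ‖A‖_F²/(‖A‖_F² − ‖A_{J_{k-1}}‖_F²) + (1−θ)) σ_min(A)²/‖A‖_F²) ‖x_k − x⋆‖²_{AᵀA}`. -/
theorem stmt8 {m n : ℕ} (A : Matrix (Fin m) (Fin n) ℝ) (hA : FullColRank A)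
    (b : Fin m → ℝ) (xstar : Fin n → ℝ) (hstar : (Aᵀ * A) *ᵥ xstar = Aᵀ *ᵥ b)
    (θ : ℝ) (hθ : θ ∈ Set.Icc (0 : ℝ) 1)
    (xprev : Fin n → ℝ) (rprev : Fin m → ℝ) (hrprev : rprev = b - A *ᵥ xprev)
    (hrprev0 : Aᵀ *ᵥ rprev ≠ 0)
    (Jprev : Finset (Fin n)) (hJprev : Jprev = greedySet A rprev θ)
    (hproper : Jprev ≠ Finset.univ)
    (xk : Fin n → ℝ)
    (hxk : xk = xprev + subId Jprev *ᵥ (pinv (subCols A Jprev) *ᵥ (b - A *ᵥ xprev)))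
    (rk : Fin m → ℝ) (hrk : rk = b - A *ᵥ xk) (hrk0 : Aᵀ *ᵥ rk ≠ 0)
    (Jk : Finset (Fin n)) (hJk : Jk = greedySet A rk θ)
    (xk1 : Fin n → ℝ)
    (hxk1 : xk1 = xk + subId Jk *ᵥ (pinv (subCols A Jk) *ᵥ (b - A *ᵥ xk))) :
    norm2 (A *ᵥ (xk1 - xstar)) ≤
      (1 - frob2 (subCols A Jk) / sigmaMaxSq (subCols A Jk) *
          (θ * frob2 A / (frob2 A - frob2 (subCols A Jprev)) + (1 - θ)) *
          (sigmaMinSq A / frob2 A)) *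
        norm2 (A *ᵥ (xk - xstar)) :=
  stmt8_general A hA b xstar hstar θ hθ xprev Jprev xk hxk rk hrk hrk0 Jk hJk xk1 hxk1
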